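/- The subgroup ⟨X, q⟩_{M(G)} of the Miller Machine M(G) is invariant under conjugation by ⟨Θ⟩_{M(G)}: for every g ∈ ⟨X, q⟩_{M(G)} and every τ₀ ∈ ⟨Θ⟩_{M(G)}, the element τ₀ g τ₀⁻¹ lies in ⟨X, q⟩_{M(G)}. -/

import Mathlib

/-!
Common setup: a finitely presented group `G = ⟨X ∣ R⟩` (`X` a finite set, `R` a finite
nonempty set of words of the free group `F(X)`) and its Miller machine `M(G)`,
the group generated by `X ∪ Θ ∪ {q}`, where `Θ = {θ_α : α ∈ X ∪ R}`, subject to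
the relations `θ_α x = x θ_α` (`x ∈ X`, `α ∈ X ∪ R`), `θ_x x q = q x θ_x` (`x ∈ X`)
and `θ_r q = q r θ_r` (`r ∈ R`).
-/

namespace Miller

noncomputable section

/-- Index type for the letters `Θ`: one letter `θ_α` for each `α ∈ X ∪ R`
(since `X ∩ R = ∅`, the disjoint sum is faithful). -/
abbrev ThIdx (X : Type) (R : Finset (FreeGroup X)) : Type := X ⊕ {r : FreeGroup X // r ∈ R}

/-- The generators of the Miller machine: the letters of `X`, the letters `Θ`, and `q`. -/
abbrev Gen (X : Type) (R : Finset (FreeGroup X)) : Type := X ⊕ (ThIdx X R ⊕ Unit)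

variable (X : Type) (R : Finset (FreeGroup X))

/-- The letter `x ∈ X`, as a word on the generators of `M(G)`. -/
def xg (x : X) : FreeGroup (Gen X R) := FreeGroup.of (Sum.inl x)

/-- The letter `θ_α`, as a word on the generators of `M(G)`. -/
def θg (a : ThIdx X R) : FreeGroup (Gen X R) := FreeGroup.of (Sum.inr (Sum.inl a))

/-- The letter `q`, as a word on the generators of `M(G)`. -/
def qg : FreeGroup (Gen X R) := FreeGroup.of (Sum.inr (Sum.inr ()))

/-- A word on `X` is in particular a word on the generators of `M(G)`. -/
def ofX : FreeGroup X →* FreeGroup (Gen X R) := FreeGroup.map Sum.inl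

/-- The defining relators of the Miller machine `M(G)`. -/
def rels : Set (FreeGroup (Gen X R)) :=
  {w | (∃ (a : ThIdx X R) (x : X),
          w = θg X R a * xg X R x * (xg X R x * θg X R a)⁻¹) ∨
       (∃ x : X,
          w = θg X R (Sum.inl x) * xg X R x * qg X R *
              (qg X R * xg X R x * θg X R (Sum.inl x))⁻¹) ∨
       (∃ r : {r : FreeGroup X // r ∈ R},
          w = θg X R (Sum.inr r) * qg X R *
              (qg X R * ofX X R r.1 * θg X R (Sum.inr r))⁻¹)}

/-- The group `G = ⟨X ∣ R⟩`. -/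
abbrev G := PresentedGroup (R : Set (FreeGroup X))

/-- The Miller machine `M(G)`. -/
abbrev M := PresentedGroup (rels X R)

/-- The element of `G` represented by a word on `X`. -/
def toG : FreeGroup X →* G X R := PresentedGroup.mk _

/-- The element of `M(G)` represented by a word on the generators. -/
def toM : FreeGroup (Gen X R) →* M X R := PresentedGroup.mk _

/-- The element of `M(G)` represented by a word on `X`. -/
def embX : FreeGroup X →* M X R := (toM X R).comp (ofX X R)

/-- The element of `M(G)` represented by a word on `Θ`. -/
def embTh : FreeGroup (ThIdx X R) →* M X R :=
  (toM X R).comp (FreeGroup.map fun a => Sum.inr (Sum.inl a))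

/-- The generator `x ∈ X` as element of `M(G)`. -/
def xM (x : X) : M X R := toM X R (xg X R x)

/-- The generator `θ_α` as element of `M(G)`. -/
def θM (a : ThIdx X R) : M X R := toM X R (θg X R a)

/-- The generator `q` as element of `M(G)`. -/
def qM : M X R := toM X R (qg X R)

/-- The subgroup `⟨X, q⟩` of `M(G)`. -/
def XqSub : Subgroup (M X R) := Subgroup.closure (Set.range (xM X R) ∪ {qM X R})

/-- The subgroup `⟨Θ⟩` of `M(G)`. -/
def ThSub : Subgroup (M X R) := Subgroup.closure (Set.range (θM X R))

/-- The subgroup `H = ⟨X ∪ Θ⟩` of `M(G)`. -/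
def Hgrp : Subgroup (M X R) := Subgroup.closure (Set.range (xM X R) ∪ Set.range (θM X R))

/-- The subgroup `K₋₁ = ⟨{θ_x x : x ∈ X} ∪ {θ_r : r ∈ R}⟩` of `M(G)`. -/
def Kneg : Subgroup (M X R) := Subgroup.closure
  ((Set.range fun x : X => θM X R (Sum.inl x) * xM X R x) ∪
   (Set.range fun r : {r : FreeGroup X // r ∈ R} => θM X R (Sum.inr r)))

/-- The subgroup `K₁ = ⟨{θ_x x : x ∈ X} ∪ {θ_r r : r ∈ R}⟩` of `M(G)`. -/
def Kpos : Subgroup (M X R) := Subgroup.closure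
  ((Set.range fun x : X => θM X R (Sum.inl x) * xM X R x) ∪
   (Set.range fun r : {r : FreeGroup X // r ∈ R} => θM X R (Sum.inr r) * embX X R r.1))

/-- `‖g‖`: the (reduced) word length of an element of a free group. -/
def wlen {β : Type} (g : FreeGroup β) : ℕ :=
  sInf {n | ∃ l : List (β × Bool), FreeGroup.mk l = g ∧ l.length = n}

/-- `|g|`: word length in `M(G)` with respect to the generating set `X ∪ Θ ∪ {q}`. -/
def mlen (g : M X R) : ℕ :=
  sInf {n | ∃ w : FreeGroup (Gen X R), toM X R w = g ∧ wlen w = n}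

/-- `c(u,v)`: the minimal length of a conjugator taking `u` to `v` in `M(G)`. -/
def c (u v : M X R) : ℕ :=
  sInf {n | ∃ γ : M X R, γ * u * γ⁻¹ = v ∧ mlen X R γ = n}

/-- `c'(u,v)`: the minimal length of a conjugator in `⟨X ∪ Θ⟩` taking `u` to `v`. -/
def c' (u v : M X R) : ℕ :=
  sInf {n | ∃ γ ∈ Hgrp X R, γ * u * γ⁻¹ = v ∧ mlen X R γ = n}

/-- The product `∏_{i<m} w_i r_i w_i⁻¹`. -/
def prodConj (m : ℕ) (w r : ℕ → FreeGroup X) : FreeGroup X :=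
  ((List.range m).map fun i => w i * r i * (w i)⁻¹).prod

/-- `r_0, …, r_{m-1} ∈ R^{±1}`. -/
def IsRelSeq (m : ℕ) (r : ℕ → FreeGroup X) : Prop := ∀ i < m, r i ∈ R ∨ (r i)⁻¹ ∈ R

/-- `δ(g)`: the least `m` such that `g` is freely equal to a product of `m`
conjugates of elements of `R^{±1}`. -/
def area (g : FreeGroup X) : ℕ :=
  sInf {m | ∃ w r : ℕ → FreeGroup X, IsRelSeq X R m r ∧ g = prodConj X m w r}

/-- The Dehn function `Δ` of the presentation `⟨X ∣ R⟩`. -/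
def Dehn (n : ℕ) : ℕ :=
  sSup {d | ∃ g : FreeGroup X, wlen g ≤ n ∧ toG X R g = 1 ∧ area X R g = d}

/-- `f(w) = m + ‖w₁‖ + ‖w_m‖ + ∑_{i=1}^{m-1} ‖w_i⁻¹ w_{i+1}‖` (with `0`-based indexing). -/
def fval (m : ℕ) (w : ℕ → FreeGroup X) : ℕ :=
  m + wlen (w 0) + wlen (w (m - 1)) + ∑ i ∈ Finset.range (m - 1), wlen ((w i)⁻¹ * w (i + 1))

/-- `λ(g)`: the minimum of `f(w)` over expressions `w = ∏ w_i r_i w_i⁻¹` freely equal to `g`. -/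
def lam (g : FreeGroup X) : ℕ :=
  sInf {n | ∃ (m : ℕ) (w r : ℕ → FreeGroup X),
    1 ≤ m ∧ IsRelSeq X R m r ∧ g = prodConj X m w r ∧ fval X m w = n}

/-- `Λ(n)`: the maximum of `λ(g)` over words `g` with `g =_G 1` and `‖g‖ ≤ n`. -/
def Lam (n : ℕ) : ℕ :=
  sSup {d | ∃ g : FreeGroup X, wlen g ≤ n ∧ toG X R g = 1 ∧ lam X R g = d}

/-- `t = max({‖r‖ : r ∈ R} ∪ {2})`. -/
def t : ℕ := max (R.sup fun r => wlen r) 2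

/-- `w, ε` witness the iso-computational list conjugacy `u ∼^σ v` (indices `0,…,k-1`,
with the convention that the index after `k-1` is `0`, i.e. `σ_{k+1} = σ₁`). -/
def IsICLCWitness (k : ℕ) (σ : ℕ → ℤ) (u v : ℕ → FreeGroup X) (w ε : FreeGroup X) : Prop :=
  toG X R ε = 1 ∧ ∀ i < k,
    (σ i = 1 ∧ σ ((i + 1) % k) = 1 → w * ε * u i * w⁻¹ = v i) ∧
    (σ i = 1 ∧ σ ((i + 1) % k) = -1 → w * ε * u i * ε⁻¹ * w⁻¹ = v i) ∧
    (σ i = -1 ∧ σ ((i + 1) % k) = 1 → w * u i * w⁻¹ = v i) ∧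
    (σ i = -1 ∧ σ ((i + 1) % k) = -1 → w * u i * ε⁻¹ * w⁻¹ = v i)

/-- Iso-computational list conjugacy `u ∼^σ v`. -/
def ICLC (k : ℕ) (σ : ℕ → ℤ) (u v : ℕ → FreeGroup X) : Prop :=
  ∃ w ε : FreeGroup X, IsICLCWitness X R k σ u v w ε

/-- `c_{k,σ}(u,v)`: the least `‖w‖` over witnessing pairs `(w, ε)` for `u ∼^σ v`. -/
def cList (k : ℕ) (σ : ℕ → ℤ) (u v : ℕ → FreeGroup X) : ℕ :=
  sInf {n | ∃ w ε : FreeGroup X, IsICLCWitness X R k σ u v w ε ∧ wlen w = n}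

/-- `C_{k,σ}(n)`. -/
def CC (k : ℕ) (σ : ℕ → ℤ) (n : ℕ) : ℕ :=
  sSup {d | ∃ u v : ℕ → FreeGroup X, ICLC X R k σ u v ∧
    (∑ i ∈ Finset.range k, (wlen (u i) + wlen (v i))) ≤ n - 2 * k ∧
    cList X R k σ u v = d}

/-- The alphabet `X ∪ {q}`. -/
abbrev Yt (X : Type) : Type := X ⊕ Unit

/-- The letter `q` in the free group `F(X ∪ {q})`. -/
def qY : FreeGroup (Yt X) := FreeGroup.of (Sum.inr ())

/-- A word on `X` as a word on `X ∪ {q}`. -/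
def embY : FreeGroup X →* FreeGroup (Yt X) := FreeGroup.map Sum.inl

/-- The element of `M(G)` represented by a word on `X ∪ {q}`. -/
def toMY : FreeGroup (Yt X) →* M X R :=
  (toM X R).comp (FreeGroup.map (Sum.elim Sum.inl fun u => Sum.inr (Sum.inr u)))

/-- The word `q^{σ₁}u₁q^{σ₂}u₂⋯q^{σ_k}u_k` on `X ∪ {q}` (`0`-based indexing). -/
def qword (k : ℕ) (σ : ℕ → ℤ) (u : ℕ → FreeGroup X) : FreeGroup (Yt X) :=
  ((List.range k).map fun i => qY X ^ σ i * embY X (u i)).prod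

/-- The word `q^{σ₁}u₁q^{σ₂}u₂⋯q^{σ_k}u_k` is (freely) reduced, expressed as:
its reduced length equals the sum of the lengths of its letters. -/
def ReducedForm (k : ℕ) (σ : ℕ → ℤ) (u : ℕ → FreeGroup X) : Prop :=
  wlen (qword X k σ u) = k + ∑ i ∈ Finset.range k, wlen (u i)

/-- The element `q^{σ₁}u₁q^{σ₂}u₂⋯q^{σ_k}u_k` of `M(G)`. -/
def qwordM (k : ℕ) (σ : ℕ → ℤ) (u : ℕ → FreeGroup X) : M X R :=
  toMY X R (qword X k σ u)

/-- `σ` is a tuple of signs `±1`. -/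
def IsSgn (k : ℕ) (σ : ℕ → ℤ) : Prop := ∀ i < k, σ i = 1 ∨ σ i = -1

/-- `D_{k,σ}(n)`: restriction of the conjugator length function of `M(G)` to conjugate
pairs `x = q^{σ₁}u₁⋯q^{σ_k}u_k`, `y = q^{σ₁}v₁⋯q^{σ_k}v_k` that are reduced words with
`∑ (‖u_i‖ + ‖v_i‖) ≤ n - 2k`. -/
def Dk (k : ℕ) (σ : ℕ → ℤ) (n : ℕ) : ℕ :=
  sSup {d | ∃ u v : ℕ → FreeGroup X,
    ReducedForm X k σ u ∧ ReducedForm X k σ v ∧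
    IsConj (qwordM X R k σ u) (qwordM X R k σ v) ∧
    (∑ i ∈ Finset.range k, (wlen (u i) + wlen (v i))) ≤ n - 2 * k ∧
    c X R (qwordM X R k σ u) (qwordM X R k σ v) = d}

/-- `D'_{k,σ}(n)`: as `D_{k,σ}(n)`, but for pairs conjugate via an element of `⟨X ∪ Θ⟩`
and with minimal conjugator length measured over conjugators in `⟨X ∪ Θ⟩`. -/
def Dk' (k : ℕ) (σ : ℕ → ℤ) (n : ℕ) : ℕ :=
  sSup {d | ∃ u v : ℕ → FreeGroup X,
    ReducedForm X k σ u ∧ ReducedForm X k σ v ∧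
    (∃ γ ∈ Hgrp X R, γ * qwordM X R k σ u * γ⁻¹ = qwordM X R k σ v) ∧
    (∑ i ∈ Finset.range k, (wlen (u i) + wlen (v i))) ≤ n - 2 * k ∧
    c' X R (qwordM X R k σ u) (qwordM X R k σ v) = d}

/-- `D₀(n)`: restriction of the conjugator length function of `M(G)` to pairs
`(qu, q)` with `u` a word on `X`, `qu` conjugate to `q`, and `‖u‖ ≤ n - 2`. -/
def D0 (n : ℕ) : ℕ :=
  sSup {d | ∃ u : FreeGroup X, wlen u ≤ n - 2 ∧
    IsConj (qM X R * embX X R u) (qM X R) ∧ c X R (qM X R * embX X R u) (qM X R) = d}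

/-- `D'₀(n)`: as `D₀(n)`, via conjugators in `⟨X ∪ Θ⟩`. -/
def D0' (n : ℕ) : ℕ :=
  sSup {d | ∃ u : FreeGroup X, wlen u ≤ n - 2 ∧
    (∃ γ ∈ Hgrp X R, γ * (qM X R * embX X R u) * γ⁻¹ = qM X R) ∧
    c' X R (qM X R * embX X R u) (qM X R) = d}

/-- The endomorphism `φ_α` of `F(X ∪ {q})`: it fixes each `x ∈ X` and sends `q` to
`α⁻¹qα` if `α ∈ X` and to `qα` if `α ∈ R`. -/
def phi (a : ThIdx X R) : FreeGroup (Yt X) →* FreeGroup (Yt X) :=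
  FreeGroup.lift fun s =>
    match s with
    | Sum.inl x => FreeGroup.of (Sum.inl x : Yt X)
    | Sum.inr _ =>
      match a with
      | Sum.inl x' => (FreeGroup.of (Sum.inl x' : Yt X))⁻¹ * qY X * FreeGroup.of (Sum.inl x')
      | Sum.inr r => qY X * embY X r.1

end

end Miller

/-!
Each `θ_α` commutes with `X`, and the defining relations give `θ_x q θ_x⁻¹ = x⁻¹ q x`,
`θ_x⁻¹ q θ_x = x q x⁻¹`, `θ_r q θ_r⁻¹ = q r` and `θ_r⁻¹ q θ_r = q r⁻¹`. So conjugation by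
`θ_α` and by `θ_α⁻¹` maps the generators of `⟨X, q⟩` into `⟨X, q⟩`, i.e. every `θ_α`, and
hence all of `⟨Θ⟩`, normalises `⟨X, q⟩`.
-/

namespace Subgroup

theorem mem_normalizer_closure_of_conj_mem {G : Type*} [Group G] {s : Set G} {g : G}
    (hg : ∀ x ∈ s, g * x * g⁻¹ ∈ closure s) (hg' : ∀ x ∈ s, g⁻¹ * x * g ∈ closure s) :
    g ∈ normalizer (closure s : Set G) := by
  rw [mem_normalizer_iff_map_conj_eq, MonoidHom.map_closure]
  refine le_antisymm ((closure_le _).2 ?_) ((closure_le _).2 fun x hx ↦ ?_)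
  · rintro _ ⟨x, hx, rfl⟩
    exact hg x hx
  · rw [← MonoidHom.map_closure]
    exact ⟨g⁻¹ * x * g, hg' x hx, by simp [mul_assoc]⟩

end Subgroup

namespace Miller

variable {X : Type} {R : Finset (FreeGroup X)}

theorem toM_eq_of_mul_inv_mem_rels {u v : FreeGroup (Gen X R)} (h : u * v⁻¹ ∈ rels X R) :
    toM X R u = toM X R v := by
  rw [← mul_inv_eq_one, ← map_inv, ← map_mul]
  exact (QuotientGroup.eq_one_iff _).mpr (Subgroup.subset_normalClosure h)

theorem commute_θM_xM (a : ThIdx X R) (x : X) : Commute (θM X R a) (xM X R x) := by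
  have h := toM_eq_of_mul_inv_mem_rels (R := R) (Or.inl ⟨a, x, rfl⟩)
  simp only [map_mul] at h
  exact h

theorem θM_inl_mul_xM_mul_qM (x : X) :
    θM X R (.inl x) * xM X R x * qM X R = qM X R * xM X R x * θM X R (.inl x) := by
  have h := toM_eq_of_mul_inv_mem_rels (R := R) (Or.inr (Or.inl ⟨x, rfl⟩))
  simp only [map_mul] at h
  exact h

theorem θM_inr_mul_qM (r : {r : FreeGroup X // r ∈ R}) :
    θM X R (.inr r) * qM X R = qM X R * embX X R r.1 * θM X R (.inr r) := by
  have h := toM_eq_of_mul_inv_mem_rels (R := R) (Or.inr (Or.inr ⟨r, rfl⟩))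
  simp only [map_mul] at h
  exact h

theorem commute_θM_embX (a : ThIdx X R) (u : FreeGroup X) : Commute (θM X R a) (embX X R u) := by
  induction u using FreeGroup.induction_on with
  | C1 => rw [map_one]; exact Commute.one_right _
  | of x => exact commute_θM_xM a x
  | inv_of x ih => rw [map_inv]; exact ih.inv_right
  | mul u v hu hv => rw [map_mul]; exact hu.mul_right hv

theorem θM_inl_conj_qM (x : X) :
    θM X R (.inl x) * qM X R * (θM X R (.inl x))⁻¹ = (xM X R x)⁻¹ * qM X R * xM X R x := by
  calc θM X R (.inl x) * qM X R * (θM X R (.inl x))⁻¹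
      = (xM X R x)⁻¹ * (θM X R (.inl x) * xM X R x * qM X R) * (θM X R (.inl x))⁻¹ := by
        rw [(commute_θM_xM _ x).eq]; group
    _ = (xM X R x)⁻¹ * qM X R * xM X R x := by rw [θM_inl_mul_xM_mul_qM]; group

theorem θM_inl_inv_conj_qM (x : X) :
    (θM X R (.inl x))⁻¹ * qM X R * θM X R (.inl x) = xM X R x * qM X R * (xM X R x)⁻¹ := by
  calc (θM X R (.inl x))⁻¹ * qM X R * θM X R (.inl x)
      = (θM X R (.inl x))⁻¹ * (qM X R * xM X R x * θM X R (.inl x)) * (xM X R x)⁻¹ := by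
        rw [mul_assoc (qM X R), ← (commute_θM_xM _ x).eq]; group
    _ = xM X R x * qM X R * (xM X R x)⁻¹ := by
        rw [← θM_inl_mul_xM_mul_qM]; group

theorem θM_inr_conj_qM (r : {r : FreeGroup X // r ∈ R}) :
    θM X R (.inr r) * qM X R * (θM X R (.inr r))⁻¹ = qM X R * embX X R r.1 := by
  rw [θM_inr_mul_qM]; group

theorem θM_inr_inv_conj_qM (r : {r : FreeGroup X // r ∈ R}) :
    (θM X R (.inr r))⁻¹ * qM X R * θM X R (.inr r) = qM X R * (embX X R r.1)⁻¹ := by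
  calc (θM X R (.inr r))⁻¹ * qM X R * θM X R (.inr r)
      = (θM X R (.inr r))⁻¹ * (qM X R * embX X R r.1 * θM X R (.inr r)) * (embX X R r.1)⁻¹ := by
        rw [mul_assoc (qM X R), ← (commute_θM_embX _ r.1).eq]; group
    _ = qM X R * (embX X R r.1)⁻¹ := by rw [← θM_inr_mul_qM]; group

theorem xM_mem_XqSub (x : X) : xM X R x ∈ XqSub X R :=
  Subgroup.subset_closure (Or.inl ⟨x, rfl⟩)

theorem qM_mem_XqSub : qM X R ∈ XqSub X R :=
  Subgroup.subset_closure (Or.inr rfl)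

theorem embX_mem_XqSub (u : FreeGroup X) : embX X R u ∈ XqSub X R := by
  induction u using FreeGroup.induction_on with
  | C1 => rw [map_one]; exact one_mem _
  | of x => exact xM_mem_XqSub x
  | inv_of x ih => rw [map_inv]; exact inv_mem ih
  | mul u v hu hv => rw [map_mul]; exact mul_mem hu hv

theorem θM_mem_normalizer_XqSub (a : ThIdx X R) :
    θM X R a ∈ Subgroup.normalizer (XqSub X R : Set (M X R)) := by
  apply Subgroup.mem_normalizer_closure_of_conj_mem
  · rintro _ (⟨x, rfl⟩ | rfl)
    · rw [(commute_θM_xM a x).mul_inv_cancel]; exact xM_mem_XqSub x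
    rcases a with x | r
    · rw [θM_inl_conj_qM]
      exact mul_mem (mul_mem (inv_mem (xM_mem_XqSub x)) qM_mem_XqSub) (xM_mem_XqSub x)
    · rw [θM_inr_conj_qM]
      exact mul_mem qM_mem_XqSub (embX_mem_XqSub _)
  · rintro _ (⟨x, rfl⟩ | rfl)
    · rw [(commute_θM_xM a x).inv_mul_cancel]; exact xM_mem_XqSub x
    rcases a with x | r
    · rw [θM_inl_inv_conj_qM]
      exact mul_mem (mul_mem (xM_mem_XqSub x) qM_mem_XqSub) (inv_mem (xM_mem_XqSub x))
    · rw [θM_inr_inv_conj_qM]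
      exact mul_mem qM_mem_XqSub (inv_mem (embX_mem_XqSub _))

theorem ThSub_le_normalizer_XqSub : ThSub X R ≤ Subgroup.normalizer (XqSub X R : Set (M X R)) :=
  (Subgroup.closure_le _).2 (Set.range_subset_iff.2 θM_mem_normalizer_XqSub)

end Miller

open Miller in
theorem statement9_general (X : Type) (R : Finset (FreeGroup X))
    (g : M X R) (hg : g ∈ XqSub X R) (τ₀ : M X R) (hτ₀ : τ₀ ∈ ThSub X R) :
    τ₀ * g * τ₀⁻¹ ∈ XqSub X R :=
  Subgroup.le_normalizer_iff.1 ThSub_le_normalizer_XqSub τ₀ hτ₀ g hg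

open Miller in
/-- The subgroup `⟨X, q⟩` of the Miller machine `M(G)` is invariant under
conjugation by `⟨Θ⟩`: for every `g ∈ ⟨X, q⟩` and every `τ₀ ∈ ⟨Θ⟩`, the element `τ₀ g τ₀⁻¹`
lies in `⟨X, q⟩`. -/
theorem statement9 (X : Type) [Fintype X] (R : Finset (FreeGroup X)) (hR : R.Nonempty)
    (g : M X R) (hg : g ∈ XqSub X R) (τ₀ : M X R) (hτ₀ : τ₀ ∈ ThSub X R) :
    τ₀ * g * τ₀⁻¹ ∈ XqSub X R :=
  statement9_general X R g hg τ₀ hτ₀
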